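/- Let f: ℝ^{d₁} × ℝ^{d₂} → ℝ be twice continuously differentiable and let (x*,y*) be a local minimax point of f. Then ∇²_{yy} f(x*,y*) is negative semidefinite. Moreover, if ∇²_{yy} f(x*,y*) is negative definite, then the Schur complement [∇²_{xx} f − ∇²_{xy} f (∇²_{yy} f)^{-1} ∇²_{yx} f](x*,y*) is positive semidefinite. -/

import Mathlib

open Metric Filter Set Matrix

noncomputable section

/-- `(xs, ys)` is a local minimax point of `f`. -/
def IsLocalMinimax {d₁ d₂ : ℕ}
    (f : EuclideanSpace ℝ (Fin d₁) → EuclideanSpace ℝ (Fin d₂) → ℝ)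
    (xs : EuclideanSpace ℝ (Fin d₁)) (ys : EuclideanSpace ℝ (Fin d₂)) : Prop :=
  ∃ δ₀ > (0 : ℝ), ∃ h : ℝ → ℝ,
    (∀ δ ∈ Set.Ioc (0 : ℝ) δ₀, 0 ≤ h δ) ∧
    Tendsto h (nhdsWithin 0 (Set.Ioi 0)) (nhds 0) ∧
    ∀ δ ∈ Set.Ioc (0 : ℝ) δ₀, ∀ x y,
      ‖x - xs‖ ≤ δ → ‖y - ys‖ ≤ δ →
        f xs y ≤ f xs ys ∧ f xs ys ≤ sSup (f x '' closedBall ys (h δ))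

/-- The partial Hessian matrix `∇²_{xx} f (xs, ys)`. -/
def hessXX {d₁ d₂ : ℕ}
    (f : EuclideanSpace ℝ (Fin d₁) → EuclideanSpace ℝ (Fin d₂) → ℝ)
    (xs : EuclideanSpace ℝ (Fin d₁)) (ys : EuclideanSpace ℝ (Fin d₂)) :
    Matrix (Fin d₁) (Fin d₁) ℝ :=
  Matrix.of fun i j =>
    fderiv ℝ (fun x => fderiv ℝ (fun x' => f x' ys) x) xs
      (EuclideanSpace.single i 1) (EuclideanSpace.single j 1)

/-- The partial Hessian matrix `∇²_{yy} f (xs, ys)`. -/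
def hessYY {d₁ d₂ : ℕ}
    (f : EuclideanSpace ℝ (Fin d₁) → EuclideanSpace ℝ (Fin d₂) → ℝ)
    (xs : EuclideanSpace ℝ (Fin d₁)) (ys : EuclideanSpace ℝ (Fin d₂)) :
    Matrix (Fin d₂) (Fin d₂) ℝ :=
  Matrix.of fun i j =>
    fderiv ℝ (fun y => fderiv ℝ (f xs) y) ys
      (EuclideanSpace.single i 1) (EuclideanSpace.single j 1)

/-- The mixed partial Hessian matrix `∇²_{xy} f (xs, ys)` (so that
`∇²_{yx} f = (∇²_{xy} f)ᵀ`). -/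
def hessXY {d₁ d₂ : ℕ}
    (f : EuclideanSpace ℝ (Fin d₁) → EuclideanSpace ℝ (Fin d₂) → ℝ)
    (xs : EuclideanSpace ℝ (Fin d₁)) (ys : EuclideanSpace ℝ (Fin d₂)) :
    Matrix (Fin d₁) (Fin d₂) ℝ :=
  Matrix.of fun i j =>
    fderiv ℝ (fun x => fderiv ℝ (f x) ys) xs
      (EuclideanSpace.single i 1) (EuclideanSpace.single j 1)

/-! Since `y ↦ f xs y` has a local maximum at `ys`, `∇²_{yy} f` is negative semidefinite.
For the Schur complement `S`, let `B` be the full Hessian of `f` at `(xs, ys)`, fix `U` and put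
`V = -(∇²_{yy} f)⁻¹ ∇²_{yx} f U`, so that `(U, V)` is `B`-orthogonal to `0 × ℝ^{d₂}` and
`B ((U, V), (U, V)) = Uᵀ S U`. The second-order Taylor expansion with error `ε ‖·‖²` then bounds
`f (xs + t U) y`, uniformly for `y` near `ys`, by `f xs ys + t a + t² (Uᵀ S U / 2 + O(ε))`, with
`a` the `x`-derivative in direction `U`: for small `ε` the negative definite block `∇²_{yy} f`
absorbs the error in the `y`-direction. The local minimax property puts `f xs ys` below this
bound for all small `t` of both signs, so the coefficient of `t²` is nonnegative; letting `ε → 0`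
gives `Uᵀ S U ≥ 0`. -/

open scoped Topology
open Function

namespace EuclideanSpace

variable {ι κ : Type*} [DecidableEq ι] [DecidableEq κ]

def toMatrix₂ (Φ : EuclideanSpace ℝ ι →L[ℝ] EuclideanSpace ℝ κ →L[ℝ] ℝ) : Matrix ι κ ℝ :=
  Matrix.of fun i j => Φ (single i 1) (single j 1)

theorem toLp_eq_sum_single [Fintype ι] (x : ι → ℝ) :
    WithLp.toLp 2 x = ∑ i, x i • single i (1 : ℝ) := by
  ext j
  simp [Pi.single_apply]

theorem dotProduct_toMatrix₂_mulVec [Fintype ι] [Fintype κ]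
    (Φ : EuclideanSpace ℝ ι →L[ℝ] EuclideanSpace ℝ κ →L[ℝ] ℝ) (x : ι → ℝ) (y : κ → ℝ) :
    x ⬝ᵥ (toMatrix₂ Φ *ᵥ y) = Φ (WithLp.toLp 2 x) (WithLp.toLp 2 y) := by
  simp only [toLp_eq_sum_single, map_sum, map_smul, _root_.sum_apply, _root_.smul_apply,
    smul_eq_mul, dotProduct, mulVec, toMatrix₂, of_apply, Finset.mul_sum]
  rw [Finset.sum_comm]
  exact Finset.sum_congr rfl fun i _ => Finset.sum_congr rfl fun j _ => by ring

theorem toMatrix₂_neg (Φ : EuclideanSpace ℝ ι →L[ℝ] EuclideanSpace ℝ κ →L[ℝ] ℝ) :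
    toMatrix₂ (-Φ) = -toMatrix₂ Φ := by
  ext i j
  simp [toMatrix₂]

theorem isHermitian_toMatrix₂ {Φ : EuclideanSpace ℝ ι →L[ℝ] EuclideanSpace ℝ ι →L[ℝ] ℝ}
    (hΦ : ∀ v w, Φ v w = Φ w v) : (toMatrix₂ Φ).IsHermitian := by
  ext i j
  simp [toMatrix₂, hΦ (single i 1)]

theorem posSemidef_toMatrix₂ [Fintype ι] {Φ : EuclideanSpace ℝ ι →L[ℝ] EuclideanSpace ℝ ι →L[ℝ] ℝ}
    (hΦ : ∀ v w, Φ v w = Φ w v) (hpos : ∀ v, 0 ≤ Φ v v) : (toMatrix₂ Φ).PosSemidef :=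
  .of_dotProduct_mulVec_nonneg (isHermitian_toMatrix₂ hΦ) fun x => by
    simpa [dotProduct_toMatrix₂_mulVec] using hpos (WithLp.toLp 2 x)

end EuclideanSpace

theorem Matrix.dotProduct_mulVec_eq_inv_mulVec_dotProduct {m n : Type*} [Fintype m] [Fintype n]
    [DecidableEq n] (B : Matrix m n ℝ) {C : Matrix n n ℝ} (hC : Cᵀ = C) (hCdet : IsUnit C.det)
    (x : m → ℝ) (y : n → ℝ) : x ⬝ᵥ B *ᵥ y = (C⁻¹ *ᵥ Bᵀ *ᵥ x) ⬝ᵥ C *ᵥ y := by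
  rw [dotProduct_mulVec _ C, ← mulVec_transpose, hC, mulVec_mulVec, mul_nonsing_inv _ hCdet,
    one_mulVec, mulVec_transpose, ← dotProduct_mulVec]

theorem nonneg_of_eventually_nonneg_mul_add_sq {a b : ℝ}
    (h : ∀ᶠ t in 𝓝 (0 : ℝ), 0 ≤ t * a + t ^ 2 * b) : 0 ≤ b := by
  obtain ⟨ρ, hρ, hball⟩ := Metric.eventually_nhds_iff.1 h
  have hpos := hball (y := ρ / 2) (by simpa [abs_of_pos hρ] using half_lt_self hρ)
  have hneg := hball (y := -(ρ / 2)) (by simpa [abs_of_pos hρ] using half_lt_self hρ)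
  have : 0 ≤ (ρ / 2) ^ 2 * b := by nlinarith
  exact (mul_nonneg_iff_of_pos_left (by positivity)).1 this

theorem nonneg_of_forall_nonneg_add_mul {a b ε₀ : ℝ} (hε₀ : 0 < ε₀)
    (h : ∀ ε ∈ Ioo 0 ε₀, 0 ≤ a + ε * b) : 0 ≤ a := by
  have hcont : Continuous fun ε : ℝ => a + ε * b := by fun_prop
  have hlim : Tendsto (fun ε => a + ε * b) (𝓝[>] 0) (𝓝 a) :=
    (hcont.tendsto' 0 a (by simp)).mono_left nhdsWithin_le_nhds
  exact ge_of_tendsto hlim (eventually_of_mem (Ioo_mem_nhdsGT hε₀) h)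

theorem ContinuousLinearMap.exists_pos_mul_norm_sq_le {E : Type*} [NormedAddCommGroup E]
    [NormedSpace ℝ E] [FiniteDimensional ℝ E] {Φ : E →L[ℝ] E →L[ℝ] ℝ}
    (hΦ : ∀ v ≠ 0, 0 < Φ v v) : ∃ c > 0, ∀ v, c * ‖v‖ ^ 2 ≤ Φ v v := by
  have hcont : Continuous fun v => Φ v v := Φ.continuous₂.comp (continuous_id.prodMk continuous_id)
  obtain ⟨c, hc, hsphere⟩ := (isCompact_sphere (0 : E) 1).exists_forall_le' hcont.continuousOn
    fun v hv => hΦ v (ne_zero_of_mem_unit_sphere ⟨v, hv⟩)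
  refine ⟨c, hc, fun v => ?_⟩
  rcases eq_or_ne v 0 with rfl | hv
  · simp
  have hnorm : 0 < ‖v‖ := norm_pos_iff.2 hv
  have := hsphere (‖v‖⁻¹ • v) (by simp [norm_smul, hnorm.ne'])
  simp only [map_smul, _root_.smul_apply, smul_eq_mul] at this
  calc c * ‖v‖ ^ 2 ≤ ‖v‖⁻¹ * (‖v‖⁻¹ * Φ v v) * ‖v‖ ^ 2 := by gcongr
    _ = Φ v v := by field_simp

section Calculus

variable {G : Type*} [NormedAddCommGroup G] [NormedSpace ℝ G]

theorem ContDiff.fderiv_fderiv_comm {F : Type*} [NormedAddCommGroup F] [NormedSpace ℝ F]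
    {g : G → F} (hg : ContDiff ℝ 2 g) (z v w : G) :
    fderiv ℝ (fderiv ℝ g) z v w = fderiv ℝ (fderiv ℝ g) z w v :=
  (hg.contDiffAt.isSymmSndFDerivAt (by simp)).eq v w

theorem ContDiff.hasFDerivAt_fderiv {F : Type*} [NormedAddCommGroup F] [NormedSpace ℝ F]
    {g : G → F} (hg : ContDiff ℝ 2 g) (z : G) :
    HasFDerivAt (fderiv ℝ g) (fderiv ℝ (fderiv ℝ g) z) z :=
  ((hg.fderiv_right (m := 1) (by norm_num)).differentiable one_ne_zero z).hasFDerivAt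

theorem isLittleO_norm_sq_of_hasFDerivAt {F : Type*} [NormedAddCommGroup F] [NormedSpace ℝ F]
    {φ : G → F} {φ' : G → G →L[ℝ] F} (hφ : ∀ w, HasFDerivAt φ (φ' w) w) (h0 : φ 0 = 0)
    (hφ' : φ' =o[𝓝 0] fun w => w) : φ =o[𝓝 0] fun w => ‖w‖ ^ 2 := by
  refine Asymptotics.IsLittleO.of_bound fun c hc => ?_
  obtain ⟨r, hr, hball⟩ := Metric.eventually_nhds_iff_ball.1 (hφ'.bound hc)
  filter_upwards [Metric.ball_mem_nhds 0 hr] with w hw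
  have hbound : ∀ u ∈ closedBall (0 : G) ‖w‖, ‖φ' u‖ ≤ c * ‖w‖ := fun u hu =>
    (hball u (closedBall_subset_ball (mem_ball_zero_iff.1 hw) hu)).trans
      (mul_le_mul_of_nonneg_left (mem_closedBall_zero_iff.1 hu) hc.le)
  have := (convex_closedBall (0 : G) ‖w‖).norm_image_sub_le_of_norm_hasFDerivWithin_le
    (fun u _ => (hφ u).hasFDerivWithinAt) hbound (mem_closedBall_self (norm_nonneg w))
    (mem_closedBall_zero_iff.2 le_rfl)
  rw [h0, sub_zero, sub_zero] at this
  rwa [norm_pow, norm_norm, sq, ← mul_assoc]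

theorem ContDiff.isLittleO_taylor_two {g : G → ℝ} (hg : ContDiff ℝ 2 g) (z : G) :
    (fun w => g (z + w) - g z - fderiv ℝ g z w - fderiv ℝ (fderiv ℝ g) z w w / 2)
      =o[𝓝 0] fun w => ‖w‖ ^ 2 := by
  set B := fderiv ℝ (fderiv ℝ g) z
  refine isLittleO_norm_sq_of_hasFDerivAt
    (φ' := fun w => fderiv ℝ g (z + w) - fderiv ℝ g z - B w) (fun w => ?_) (by simp)
    (hasFDerivAt_iff_isLittleO_nhds_zero.1 (hg.hasFDerivAt_fderiv z))
  have hshift : HasFDerivAt (fun w => g (z + w)) (fderiv ℝ g (z + w)) w :=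
    ((hg.differentiable two_ne_zero (z + w)).hasFDerivAt.comp w
      ((hasFDerivAt_id w).const_add z))
  have hquad : HasFDerivAt (fun w => B w w / 2) (B w) w := by
    have hBB : HasFDerivAt (fun w => B w w) _ w :=
      B.hasFDerivAt_of_bilinear (hasFDerivAt_id w) (hasFDerivAt_id w)
    simp only [div_eq_mul_inv]
    refine (hBB.mul_const 2⁻¹).congr_fderiv ?_
    ext v
    simp only [ContinuousLinearMap.precompR_apply, ContinuousLinearMap.precompL_apply,
      ContinuousLinearMap.compL_apply, ContinuousLinearMap.comp_id, ContinuousLinearMap.id_apply,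
      smul_add, _root_.add_apply, _root_.smul_apply, smul_eq_mul, B,
      hg.fderiv_fderiv_comm z v w]
    ring
  exact ((hshift.sub_const (g z)).sub (fderiv ℝ g z).hasFDerivAt).sub hquad

theorem IsLocalMax.fderiv_fderiv_apply_self_nonpos {g : G → ℝ} (hg : ContDiff ℝ 2 g) {z : G}
    (h : IsLocalMax g z) (v : G) : fderiv ℝ (fderiv ℝ g) z v v ≤ 0 := by
  rw [← neg_nonneg]
  refine nonneg_of_forall_nonneg_add_mul one_pos (b := 2 * ‖v‖ ^ 2) fun c hc => ?_
  refine nonneg_of_eventually_nonneg_mul_add_sq (a := 0) ?_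
  have hline : Tendsto (fun t : ℝ => t • v) (𝓝 0) (𝓝 0) := by
    simpa using (tendsto_id (x := 𝓝 (0 : ℝ))).smul_const v
  have hline' : Tendsto (fun t : ℝ => z + t • v) (𝓝 0) (𝓝 z) := by
    simpa using hline.const_add z
  filter_upwards [hline.eventually ((hg.isLittleO_taylor_two z).bound hc.1),
    hline'.eventually h] with t htaylor hmax
  rw [Real.norm_eq_abs, norm_pow, norm_norm, norm_smul, Real.norm_eq_abs, mul_pow, sq_abs]
    at htaylor
  have hlower := (abs_le.1 htaylor).1
  simp only [h.fderiv_eq_zero, map_smul, _root_.zero_apply, _root_.smul_apply, smul_eq_mul]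
    at hlower
  linarith

end Calculus

section Partial

variable {E₁ E₂ : Type*} [NormedAddCommGroup E₁] [NormedSpace ℝ E₁] [NormedAddCommGroup E₂]
  [NormedSpace ℝ E₂] {f : E₁ → E₂ → ℝ}

theorem fderiv_clm_comp_apply {X Y P G : Type*} [NormedAddCommGroup X] [NormedSpace ℝ X]
    [NormedAddCommGroup Y] [NormedSpace ℝ Y] [NormedAddCommGroup P] [NormedSpace ℝ P]
    [NormedAddCommGroup G] [NormedSpace ℝ G] {D : P → P →L[ℝ] G} {B : P →L[ℝ] P →L[ℝ] G}
    {γ : X → P} {γ' : X →L[ℝ] P} {x₀ : X} (hD : HasFDerivAt D B (γ x₀))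
    (hγ : HasFDerivAt γ γ' x₀) (κ : Y →L[ℝ] P) (v : X) (w : Y) :
    fderiv ℝ (fun x => (D (γ x)).comp κ) x₀ v w = B (γ' v) (κ w) := by
  have hDγ : HasFDerivAt (fun x => D (γ x)) (B.comp γ') x₀ := hD.comp x₀ hγ
  rw [(hDγ.clm_comp (hasFDerivAt_const κ x₀)).fderiv]
  simp

theorem fderiv_apply_right {x : E₁} {y : E₂} (hf : DifferentiableAt ℝ (uncurry f) (x, y)) :
    fderiv ℝ (f x) y = (fderiv ℝ (uncurry f) (x, y)).comp (.inr ℝ E₁ E₂) :=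
  HasFDerivAt.fderiv (hf.hasFDerivAt.comp y (hasFDerivAt_prodMk_right x y) (f := fun y => (x, y)))

theorem fderiv_apply_left {x : E₁} {y : E₂} (hf : DifferentiableAt ℝ (uncurry f) (x, y)) :
    fderiv ℝ (fun x => f x y) x = (fderiv ℝ (uncurry f) (x, y)).comp (.inl ℝ E₁ E₂) :=
  HasFDerivAt.fderiv (hf.hasFDerivAt.comp x (hasFDerivAt_prodMk_left x y) (f := fun x => (x, y)))

variable (hf : ContDiff ℝ 2 (uncurry f)) (x : E₁) (y : E₂)
include hf

theorem fderiv_fderiv_right_apply (v w : E₂) :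
    fderiv ℝ (fun y => fderiv ℝ (f x) y) y v w
      = fderiv ℝ (fderiv ℝ (uncurry f)) (x, y) (0, v) (0, w) := by
  simp_rw [fderiv_apply_right (hf.differentiable two_ne_zero _)]
  exact fderiv_clm_comp_apply (hf.hasFDerivAt_fderiv _)
    (hasFDerivAt_prodMk_right x y) _ v w

theorem fderiv_fderiv_left_right_apply (v : E₁) (w : E₂) :
    fderiv ℝ (fun x => fderiv ℝ (f x) y) x v w
      = fderiv ℝ (fderiv ℝ (uncurry f)) (x, y) (v, 0) (0, w) := by
  simp_rw [fderiv_apply_right (hf.differentiable two_ne_zero _)]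
  exact fderiv_clm_comp_apply (hf.hasFDerivAt_fderiv _)
    (hasFDerivAt_prodMk_left x y) _ v w

theorem fderiv_fderiv_left_apply (v w : E₁) :
    fderiv ℝ (fun x => fderiv ℝ (fun x => f x y) x) x v w
      = fderiv ℝ (fderiv ℝ (uncurry f)) (x, y) (v, 0) (w, 0) := by
  simp_rw [fderiv_apply_left (hf.differentiable two_ne_zero _)]
  exact fderiv_clm_comp_apply (hf.hasFDerivAt_fderiv _)
    (hasFDerivAt_prodMk_left x y) _ v w

end Partial

theorem half_apply_add_mul_norm_sq_le {E₁ E₂ : Type*} [NormedAddCommGroup E₁]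
    [NormedSpace ℝ E₁] [NormedAddCommGroup E₂] [NormedSpace ℝ E₂]
    (B : E₁ × E₂ →L[ℝ] E₁ × E₂ →L[ℝ] ℝ) (hB : ∀ v w, B v w = B w v) {U : E₁} {V : E₂}
    (hV : ∀ e, B (U, V) (0, e) = 0) {c ε : ℝ} (hcoer : ∀ e, B (0, e) (0, e) ≤ -c * ‖e‖ ^ 2)
    (hε : 0 ≤ ε) (hεc : 4 * ε ≤ c) (t : ℝ) (G : E₂) :
    B (t • U, t • V + G) (t • U, t • V + G) / 2 + ε * ‖(t • U, t • V + G)‖ ^ 2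
      ≤ t ^ 2 * (B (U, V) (U, V) / 2 + ε * (‖U‖ ^ 2 + 2 * ‖V‖ ^ 2)) := by
  have hsplit : ((t • U, t • V + G) : E₁ × E₂) = t • (U, V) + (0, G) := by ext <;> simp
  have hquad : B (t • U, t • V + G) (t • U, t • V + G)
      = t ^ 2 * B (U, V) (U, V) + B (0, G) (0, G) := by
    rw [hsplit]
    simp only [map_add, map_smul, _root_.add_apply, _root_.smul_apply, smul_eq_mul, hV,
      hB (0, G) (U, V)]
    ring
  have hnorm : ‖(t • U, t • V + G)‖ ^ 2 ≤ t ^ 2 * (‖U‖ ^ 2 + 2 * ‖V‖ ^ 2) + 2 * ‖G‖ ^ 2 := by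
    have h₁ : ‖t • U‖ = |t| * ‖U‖ := by rw [norm_smul, Real.norm_eq_abs]
    have h₂ : ‖t • V + G‖ ≤ |t| * ‖V‖ + ‖G‖ := by
      rw [← Real.norm_eq_abs, ← norm_smul]; exact norm_add_le _ _
    rw [Prod.norm_mk]
    rcases le_total ‖t • U‖ ‖t • V + G‖ with h | h
    · rw [max_eq_right h]
      nlinarith [sq_abs t, norm_nonneg (t • V + G), abs_nonneg t, norm_nonneg V, norm_nonneg G,
        sq_nonneg (|t| * ‖V‖ - ‖G‖), sq_nonneg (‖U‖ * t)]
    · rw [max_eq_left h, h₁, mul_pow, sq_abs]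
      nlinarith [sq_nonneg ‖V‖, sq_nonneg ‖G‖, sq_nonneg t]
  nlinarith [hcoer G, mul_le_mul_of_nonneg_left hnorm hε,
    mul_nonneg (sub_nonneg.2 hεc) (sq_nonneg ‖G‖)]

section Minimax

variable {d₁ d₂ : ℕ} {f : EuclideanSpace ℝ (Fin d₁) → EuclideanSpace ℝ (Fin d₂) → ℝ}
  {xs : EuclideanSpace ℝ (Fin d₁)} {ys : EuclideanSpace ℝ (Fin d₂)}

theorem IsLocalMinimax.isLocalMax (hmm : IsLocalMinimax f xs ys) : IsLocalMax (f xs) ys := by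
  obtain ⟨δ₀, hδ₀, _, -, -, hle⟩ := hmm
  filter_upwards [closedBall_mem_nhds ys hδ₀] with y hy
  exact (hle δ₀ ⟨hδ₀, le_rfl⟩ xs y (by simpa using hδ₀.le) (mem_closedBall_iff_norm.1 hy)).1

theorem IsLocalMinimax.eventually_le_of_forall_le (hmm : IsLocalMinimax f xs ys) {r : ℝ}
    (hr : 0 < r) : ∀ᶠ x in 𝓝 xs, ∀ M, (∀ y ∈ closedBall ys r, f x y ≤ M) → f xs ys ≤ M := by
  obtain ⟨δ₀, hδ₀, h, hh0, hlim, hle⟩ := hmm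
  obtain ⟨δ, hδr, hδ⟩ := ((hlim.eventually (gt_mem_nhds hr)).and (Ioc_mem_nhdsGT hδ₀)).exists
  filter_upwards [closedBall_mem_nhds xs hδ.1] with x hx M hM
  calc f xs ys ≤ sSup (f x '' closedBall ys (h δ)) :=
        (hle δ hδ x ys (mem_closedBall_iff_norm.1 hx) (by simpa using hδ.1.le)).2
    _ ≤ M := csSup_le ((nonempty_closedBall.2 (hh0 δ hδ)).image _)
        (forall_mem_image.2 fun y hy => hM y (closedBall_subset_closedBall hδr.le hy))

theorem IsLocalMinimax.fderiv_fderiv_apply_self_nonneg (hf : ContDiff ℝ 2 (uncurry f))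
    (hmm : IsLocalMinimax f xs ys) {c : ℝ} (hc : 0 < c)
    (hcoer : ∀ e, fderiv ℝ (fderiv ℝ (uncurry f)) (xs, ys) (0, e) (0, e) ≤ -c * ‖e‖ ^ 2)
    {U : EuclideanSpace ℝ (Fin d₁)} {V : EuclideanSpace ℝ (Fin d₂)}
    (hV : ∀ e, fderiv ℝ (fderiv ℝ (uncurry f)) (xs, ys) (U, V) (0, e) = 0) :
    0 ≤ fderiv ℝ (fderiv ℝ (uncurry f)) (xs, ys) (U, V) (U, V) := by
  set L := fderiv ℝ (uncurry f) (xs, ys)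
  set B := fderiv ℝ (fderiv ℝ (uncurry f)) (xs, ys)
  have hL : ∀ e, L (0, e) = 0 := fun e => by
    simpa [fderiv_apply_right (hf.differentiable two_ne_zero _)] using
      congrArg (· e) hmm.isLocalMax.fderiv_eq_zero
  refine nonneg_of_forall_nonneg_add_mul (ε₀ := c / 4) (b := 2 * (‖U‖ ^ 2 + 2 * ‖V‖ ^ 2))
    (by positivity) fun ε hε => ?_
  refine nonneg_of_eventually_nonneg_mul_add_sq (a := 2 * L (U, 0)) ?_
  obtain ⟨ρ, hρ, htaylor⟩ :=
    Metric.eventually_nhds_iff.1 ((hf.isLittleO_taylor_two (xs, ys)).bound hε.1)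
  have hline : Tendsto (fun t : ℝ => t • U) (𝓝 0) (𝓝 0) := by
    simpa using (tendsto_id (x := 𝓝 (0 : ℝ))).smul_const U
  have hline' : Tendsto (fun t : ℝ => xs + t • U) (𝓝 0) (𝓝 xs) := by
    simpa using hline.const_add xs
  filter_upwards [hline'.eventually (hmm.eventually_le_of_forall_le (half_pos hρ)),
    hline.eventually (ball_mem_nhds 0 (half_pos hρ))] with t hmax htU
  suffices ∀ y ∈ closedBall ys (ρ / 2), f (xs + t • U) y ≤
      f xs ys + t * L (U, 0) + t ^ 2 * (B (U, V) (U, V) / 2 + ε * (‖U‖ ^ 2 + 2 * ‖V‖ ^ 2)) by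
    linarith [hmax _ this]
  intro y hy
  set G := y - ys - t • V
  have hw : ((xs, ys) + (t • U, t • V + G) : _ × _) = (xs + t • U, y) := by
    ext <;> simp [G]
  have hLw : L (t • U, t • V + G) = t * L (U, 0) := by
    rw [show ((t • U, t • V + G) : _ × _) = t • (U, 0) + (0, y - ys) by ext <;> simp [G],
      map_add, map_smul, hL, smul_eq_mul, add_zero]
  have hnorm : ‖((t • U, t • V + G) : _ × _)‖ < ρ := by
    rw [Prod.norm_mk, max_lt_iff]
    constructor
    · linarith [mem_ball_zero_iff.1 htU]
    · have : t • V + G = y - ys := by simp [G]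
      rw [this, ← dist_eq_norm]
      linarith [mem_closedBall.1 hy]
  have hrem := htaylor (y := (t • U, t • V + G)) (by rwa [dist_zero_right])
  rw [hw, Real.norm_eq_abs, norm_pow, norm_norm, uncurry_apply_pair, uncurry_apply_pair] at hrem
  linarith [(abs_le.1 hrem).2, half_apply_add_mul_norm_sq_le B (hf.fderiv_fderiv_comm _) hV
    hcoer hε.1.le (by linarith [hε.2]) t G]

end Minimax

section Hessian

variable {d₁ d₂ : ℕ} {f : EuclideanSpace ℝ (Fin d₁) → EuclideanSpace ℝ (Fin d₂) → ℝ}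
  (hf : ContDiff ℝ 2 (uncurry f)) (xs : EuclideanSpace ℝ (Fin d₁))
  (ys : EuclideanSpace ℝ (Fin d₂))
include hf

theorem hessXX_eq_toMatrix₂ : hessXX f xs ys = EuclideanSpace.toMatrix₂
    ((fderiv ℝ (fderiv ℝ (uncurry f)) (xs, ys)).bilinearComp (.inl ℝ _ _) (.inl ℝ _ _)) := by
  ext i j
  simp [hessXX, EuclideanSpace.toMatrix₂, fderiv_fderiv_left_apply hf]

theorem hessXY_eq_toMatrix₂ : hessXY f xs ys = EuclideanSpace.toMatrix₂
    ((fderiv ℝ (fderiv ℝ (uncurry f)) (xs, ys)).bilinearComp (.inl ℝ _ _) (.inr ℝ _ _)) := by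
  ext i j
  simp [hessXY, EuclideanSpace.toMatrix₂, fderiv_fderiv_left_right_apply hf]

theorem hessYY_eq_toMatrix₂ : hessYY f xs ys = EuclideanSpace.toMatrix₂
    ((fderiv ℝ (fderiv ℝ (uncurry f)) (xs, ys)).bilinearComp (.inr ℝ _ _) (.inr ℝ _ _)) := by
  ext i j
  simp [hessYY, EuclideanSpace.toMatrix₂, fderiv_fderiv_right_apply hf]

theorem isHermitian_hessXX : (hessXX f xs ys).IsHermitian := by
  rw [hessXX_eq_toMatrix₂ hf]
  exact EuclideanSpace.isHermitian_toMatrix₂ fun v w => hf.fderiv_fderiv_comm _ _ _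

theorem isHermitian_hessYY : (hessYY f xs ys).IsHermitian := by
  rw [hessYY_eq_toMatrix₂ hf]
  exact EuclideanSpace.isHermitian_toMatrix₂ fun v w => hf.fderiv_fderiv_comm _ _ _

theorem fderiv_fderiv_uncurry_toLp_apply (x x' : Fin d₁ → ℝ) (y y' : Fin d₂ → ℝ) :
    fderiv ℝ (fderiv ℝ (uncurry f)) (xs, ys) (WithLp.toLp 2 x, WithLp.toLp 2 y)
        (WithLp.toLp 2 x', WithLp.toLp 2 y')
      = x ⬝ᵥ hessXX f xs ys *ᵥ x' + x ⬝ᵥ hessXY f xs ys *ᵥ y' + x' ⬝ᵥ hessXY f xs ys *ᵥ y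
        + y ⬝ᵥ hessYY f xs ys *ᵥ y' := by
  have hsplit : ∀ (a : EuclideanSpace ℝ (Fin d₁)) (b : EuclideanSpace ℝ (Fin d₂)),
      (a, b) = ContinuousLinearMap.inl ℝ _ _ a + ContinuousLinearMap.inr ℝ _ _ b := by simp
  rw [hsplit (WithLp.toLp 2 x), hsplit (WithLp.toLp 2 x')]
  simp only [map_add, _root_.add_apply]
  rw [hf.fderiv_fderiv_comm _ (ContinuousLinearMap.inr ℝ _ _ _) (ContinuousLinearMap.inl ℝ _ _ _)]
  simp only [hessXX_eq_toMatrix₂ hf, hessXY_eq_toMatrix₂ hf, hessYY_eq_toMatrix₂ hf,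
    EuclideanSpace.dotProduct_toMatrix₂_mulVec, ContinuousLinearMap.bilinearComp_apply]
  ring

variable {xs ys}

section Schur

variable (hCdet : IsUnit (hessYY f xs ys).det) (x : Fin d₁ → ℝ)
include hCdet

theorem dotProduct_hessXY_add_schur_dotProduct_hessYY_eq_zero (y : Fin d₂ → ℝ) :
    x ⬝ᵥ hessXY f xs ys *ᵥ y
      + (-((hessYY f xs ys)⁻¹ *ᵥ (hessXY f xs ys)ᵀ *ᵥ x)) ⬝ᵥ hessYY f xs ys *ᵥ y = 0 := by
  have hC : (hessYY f xs ys)ᵀ = hessYY f xs ys := by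
    simpa [conjTranspose_eq_transpose_of_trivial] using (isHermitian_hessYY hf xs ys).eq
  rw [Matrix.dotProduct_mulVec_eq_inv_mulVec_dotProduct _ hC hCdet]
  simp

theorem fderiv_fderiv_schur_apply_inr (e : EuclideanSpace ℝ (Fin d₂)) :
    fderiv ℝ (fderiv ℝ (uncurry f)) (xs, ys)
      (WithLp.toLp 2 x, WithLp.toLp 2 (-((hessYY f xs ys)⁻¹ *ᵥ (hessXY f xs ys)ᵀ *ᵥ x)))
      (0, e) = 0 := by
  have := fderiv_fderiv_uncurry_toLp_apply hf xs ys x 0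
    (-((hessYY f xs ys)⁻¹ *ᵥ (hessXY f xs ys)ᵀ *ᵥ x)) (WithLp.ofLp e)
  simp only [WithLp.toLp_zero, WithLp.toLp_ofLp] at this
  rw [this]
  simpa using dotProduct_hessXY_add_schur_dotProduct_hessYY_eq_zero hf hCdet x (WithLp.ofLp e)

theorem fderiv_fderiv_schur_apply_self :
    fderiv ℝ (fderiv ℝ (uncurry f)) (xs, ys)
      (WithLp.toLp 2 x, WithLp.toLp 2 (-((hessYY f xs ys)⁻¹ *ᵥ (hessXY f xs ys)ᵀ *ᵥ x)))
      (WithLp.toLp 2 x, WithLp.toLp 2 (-((hessYY f xs ys)⁻¹ *ᵥ (hessXY f xs ys)ᵀ *ᵥ x)))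
      = x ⬝ᵥ (hessXX f xs ys
          - hessXY f xs ys * (hessYY f xs ys)⁻¹ * (hessXY f xs ys)ᵀ) *ᵥ x := by
  rw [fderiv_fderiv_uncurry_toLp_apply hf]
  have hcross := dotProduct_hessXY_add_schur_dotProduct_hessYY_eq_zero hf hCdet x
    (-((hessYY f xs ys)⁻¹ *ᵥ (hessXY f xs ys)ᵀ *ᵥ x))
  have hBv : x ⬝ᵥ hessXY f xs ys *ᵥ (-((hessYY f xs ys)⁻¹ *ᵥ (hessXY f xs ys)ᵀ *ᵥ x))
      = -(x ⬝ᵥ (hessXY f xs ys * (hessYY f xs ys)⁻¹ * (hessXY f xs ys)ᵀ) *ᵥ x) := by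
    simp only [mulVec_neg, dotProduct_neg, mulVec_mulVec, Matrix.mul_assoc]
  rw [sub_mulVec, dotProduct_sub]
  linarith

end Schur

theorem exists_pos_fderiv_fderiv_apply_inr_le (hPD : (-(hessYY f xs ys)).PosDef) :
    ∃ c > 0, ∀ e, fderiv ℝ (fderiv ℝ (uncurry f)) (xs, ys) (0, e) (0, e) ≤ -c * ‖e‖ ^ 2 := by
  obtain ⟨c, hc, hcoer⟩ := ContinuousLinearMap.exists_pos_mul_norm_sq_le
    (Φ := -((fderiv ℝ (fderiv ℝ (uncurry f)) (xs, ys)).bilinearComp (.inr ℝ _ _) (.inr ℝ _ _)))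
    fun e he => by
      have := hPD.dotProduct_mulVec_pos (x := WithLp.ofLp e) (by simpa using he)
      rwa [hessYY_eq_toMatrix₂ hf, ← EuclideanSpace.toMatrix₂_neg, star_trivial,
        EuclideanSpace.dotProduct_toMatrix₂_mulVec] at this
  refine ⟨c, hc, fun e => ?_⟩
  have := hcoer e
  simp only [_root_.neg_apply, ContinuousLinearMap.bilinearComp_apply,
    ContinuousLinearMap.inr_apply] at this
  linarith

theorem IsLocalMinimax.posSemidef_neg_hessYY (hmm : IsLocalMinimax f xs ys) :
    (-(hessYY f xs ys)).PosSemidef := by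
  have hg : ContDiff ℝ 2 (f xs) := hf.comp (contDiff_prodMk_right xs)
  rw [show hessYY f xs ys = EuclideanSpace.toMatrix₂ (fderiv ℝ (fderiv ℝ (f xs)) ys) from rfl,
    ← EuclideanSpace.toMatrix₂_neg]
  exact EuclideanSpace.posSemidef_toMatrix₂ (fun v w => by simp [hg.fderiv_fderiv_comm ys v w])
    fun v => by simpa using hmm.isLocalMax.fderiv_fderiv_apply_self_nonpos hg v

theorem IsLocalMinimax.posSemidef_schur (hmm : IsLocalMinimax f xs ys)
    (hPD : (-(hessYY f xs ys)).PosDef) :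
    (hessXX f xs ys - hessXY f xs ys * (hessYY f xs ys)⁻¹ * (hessXY f xs ys)ᵀ).PosSemidef := by
  have hCdet : IsUnit (hessYY f xs ys).det := by
    simpa [isUnit_iff_isUnit_det] using hPD.isUnit.neg
  have hSchur : (hessXY f xs ys * (hessYY f xs ys)⁻¹ * (hessXY f xs ys)ᵀ).IsHermitian := by
    simpa [conjTranspose_eq_transpose_of_trivial] using
      isHermitian_mul_mul_conjTranspose _ (isHermitian_hessYY hf xs ys).inv
  obtain ⟨c, hc, hcoer⟩ := exists_pos_fderiv_fderiv_apply_inr_le hf hPD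
  refine .of_dotProduct_mulVec_nonneg ((isHermitian_hessXX hf xs ys).sub hSchur) fun x => ?_
  rw [star_trivial, ← fderiv_fderiv_schur_apply_self hf hCdet]
  exact hmm.fderiv_fderiv_apply_self_nonneg hf hc hcoer (fderiv_fderiv_schur_apply_inr hf hCdet x)

end Hessian

/-- Second-order necessary condition for local minimax points: at a local
minimax point of a twice continuously differentiable `f`, `∇²_{yy} f` is
negative semidefinite; moreover, if `∇²_{yy} f` is negative definite then the
Schur complement `∇²_{xx} f - ∇²_{xy} f (∇²_{yy} f)⁻¹ ∇²_{yx} f` is positive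
semidefinite. -/
theorem stmt_8 {d₁ d₂ : ℕ}
    (f : EuclideanSpace ℝ (Fin d₁) → EuclideanSpace ℝ (Fin d₂) → ℝ)
    (hf : ContDiff ℝ 2
      (fun p : EuclideanSpace ℝ (Fin d₁) × EuclideanSpace ℝ (Fin d₂) => f p.1 p.2))
    (xs : EuclideanSpace ℝ (Fin d₁)) (ys : EuclideanSpace ℝ (Fin d₂))
    (hmm : IsLocalMinimax f xs ys) :
    (-(hessYY f xs ys)).PosSemidef ∧
    ((-(hessYY f xs ys)).PosDef →
      (hessXX f xs ys -
        hessXY f xs ys * (hessYY f xs ys)⁻¹ * (hessXY f xs ys)ᵀ).PosSemidef) :=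
  ⟨hmm.posSemidef_neg_hessYY hf, hmm.posSemidef_schur hf⟩
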